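/- arXiv:1111.7158 — 4 statements merged into one kernel-verified Lean document; each statement's English description precedes it below -/
import Mathlib

section
/- Let X be a compact metric space and let μ and ν be Borel probability measures on X. Then the relative entropy satisfies the Donsker–Varadhan variational formula H_μ(ν) = sup_{g ∈ C(X,ℝ)} ( ∫_X g dν − log ∫_X e^g dμ ), where the supremum ranges over all continuous real-valued functions g on X and the equality holds in [0, +∞]. -/
/-!
For `g` with `∫ e^g dμ` finite, `H_μ(ν) - (∫ g dν - log ∫ e^g dμ)` is the relative entropy of `ν`
with respect to the tilted measure `e^g μ / ∫ e^g dμ`, hence nonnegative (Gibbs).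

Conversely, for functions bounded above by a common constant, the drop of
`∫ g dν - log ∫ e^g dμ` is controlled by the `L¹(μ + ν)` distance, and continuous functions
truncated from above are dense there, so the supremum may be taken over bounded measurable `g`.
If `ν` is not absolutely continuous with respect to `μ`, large multiples of the indicator of a
`μ`-null set charged by `ν` make the functional unbounded. Otherwise let `ρ = dν/dμ` and let `g`
be `log ρ` clamped to `[-n, n]`. Since `log t ≤ t - 1`, the functional is at least
`∫ (ρ g - e^g + 1) dμ`, whose integrand is nonnegative and tends to `ρ log ρ - ρ + 1`; by Fatou's
lemma the supremum is at least `∫ (ρ log ρ - ρ + 1) dμ = H_μ(ν)`.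
-/

open MeasureTheory ENNReal

open Classical in
noncomputable def relEntropy {X : Type*} [MeasurableSpace X] (μ ν : Measure X) : ℝ≥0∞ :=
  if ν ≪ μ ∧ Integrable (fun x => Real.log (ν.rnDeriv μ x).toReal) ν then
    ENNReal.ofReal (∫ x, Real.log (ν.rnDeriv μ x).toReal ∂ν)
  else ⊤

open Real InformationTheory Filter Topology
open scoped BoundedContinuousFunction

lemma exp_sub_exp_le_exp_mul_abs_sub {a b c : ℝ} (ha : a ≤ c) :
    exp a - exp b ≤ exp c * |a - b| := by
  rcases le_total a b with hab | hba
  · nlinarith [exp_le_exp.2 hab, abs_nonneg (a - b), exp_pos c]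
  · have h1 : exp a * (1 - exp (b - a)) ≤ exp a * (a - b) :=
      mul_le_mul_of_nonneg_left (by linarith [add_one_le_exp (b - a)]) (exp_pos a).le
    rw [mul_sub, mul_one, ← exp_add, add_sub_cancel] at h1
    rw [abs_of_nonneg (sub_nonneg.2 hba)]
    nlinarith [exp_le_exp.2 ha]

-- Clamping `y` before taking the logarithm, rather than `log y` after, makes `truncLog n 0 = -n`
-- instead of the junk `log 0 = 0`, so that the limit below is right at `y = 0` too.
noncomputable def truncLog (n : ℕ) (y : ℝ) : ℝ := log (max (exp (-n)) (min (exp n) y))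

lemma abs_truncLog_le (n : ℕ) (y : ℝ) : |truncLog n y| ≤ n := by
  have hle : exp (-(n : ℝ)) ≤ exp n := exp_le_exp.2 (by linarith [n.cast_nonneg (α := ℝ)])
  have hz : 0 < max (exp (-n)) (min (exp n) y) := lt_max_of_lt_left (exp_pos _)
  rw [abs_le, truncLog, le_log_iff_exp_le hz, log_le_iff_le_exp hz]
  exact ⟨le_max_left _ _, max_le hle (min_le_left _ _)⟩

lemma truncLog_le (n : ℕ) (y : ℝ) : truncLog n y ≤ n :=
  (le_abs_self _).trans (abs_truncLog_le n y)

lemma truncLog_of_abs_log_le {y : ℝ} (hy : 0 < y) {n : ℕ} (hn : |log y| ≤ n) :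
    truncLog n y = log y := by
  rw [abs_le, le_log_iff_exp_le hy, log_le_iff_le_exp hy] at hn
  rw [truncLog, min_eq_right hn.2, max_eq_right hn.1]

lemma truncLog_zero (n : ℕ) : truncLog n 0 = -n := by
  rw [truncLog, min_eq_right (exp_pos _).le, max_eq_left (exp_pos _).le, log_exp]

lemma mul_truncLog_sub_exp_add_one_nonneg (y : ℝ) (n : ℕ) :
    0 ≤ y * truncLog n y - exp (truncLog n y) + 1 := by
  have hn : (0 : ℝ) ≤ n := n.cast_nonneg
  set z := max (exp (-n)) (min (exp n) y)
  have hz : 0 < z := lt_max_of_lt_left (exp_pos _)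
  -- `z` lies between `1` and `y`, and `y * log z - z + 1 = klFun z + (y - z) * log z`
  have hsign : 0 ≤ (y - z) * log z := by
    rcases le_total y (exp (-n)) with h₁ | h₁
    · have : z = exp (-n) := max_eq_left ((min_le_right _ _).trans h₁)
      rw [this, log_exp]
      nlinarith
    rcases le_total y (exp n) with h₂ | h₂
    · simp [z, min_eq_right h₂, max_eq_right h₁]
    · have : z = exp n := by
        simp only [z, min_eq_left h₂]
        exact max_eq_right (exp_le_exp.2 (by linarith))
      rw [this, log_exp]
      nlinarith
  have hkl := klFun_nonneg hz.le
  rw [klFun] at hkl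
  rw [truncLog, exp_log hz]
  nlinarith

lemma tendsto_mul_truncLog_sub_exp_add_one {y : ℝ} (hy : 0 ≤ y) :
    Tendsto (fun n : ℕ => y * truncLog n y - exp (truncLog n y) + 1) atTop (𝓝 (klFun y)) := by
  rcases hy.eq_or_lt with rfl | hy
  · simp only [truncLog_zero, zero_mul, zero_sub, exp_neg, klFun_zero]
    simpa using (tendsto_inv_atTop_zero.comp
      (tendsto_exp_atTop.comp tendsto_natCast_atTop_atTop)).neg.add_const 1
  · refine tendsto_const_nhds.congr' ?_
    filter_upwards [eventually_ge_atTop ⌈|log y|⌉₊] with n hn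
    rw [truncLog_of_abs_log_le hy ((Nat.le_ceil _).trans (by exact_mod_cast hn)), klFun,
      exp_log hy]
    ring

lemma measurable_truncLog (n : ℕ) : Measurable (truncLog n) := by
  unfold truncLog
  fun_prop

section Functional

variable {X : Type*} [MeasurableSpace X] {μ ν : Measure X}

lemma relEntropy_eq_klDiv [IsProbabilityMeasure μ] [IsProbabilityMeasure ν] :
    relEntropy μ ν = klDiv ν μ := by
  rw [relEntropy, klDiv_def]
  simp only [probReal_univ, add_sub_cancel_right]
  rfl

noncomputable def dvFunctional (μ ν : Measure X) (h : X → ℝ) : ℝ :=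
  ∫ x, h x ∂ν - log (∫ x, exp (h x) ∂μ)

lemma dvFunctional_le_integral_llr [IsProbabilityMeasure μ] [IsProbabilityMeasure ν]
    (hνμ : ν ≪ μ) (h_llr : Integrable (llr ν μ) ν) {h : X → ℝ} (hh : Integrable h ν)
    (hexp : Integrable (fun x => exp (h x)) μ) :
    dvFunctional μ ν h ≤ ∫ x, llr ν μ x ∂ν := by
  have := isProbabilityMeasure_tilted hexp
  have gibbs := integral_llr_add_sub_measure_univ_nonneg
    (hνμ.trans (absolutelyContinuous_tilted hexp)) (integrable_llr_tilted_right hνμ hh h_llr hexp)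
  rw [integral_llr_tilted_right hνμ hh hexp h_llr] at gibbs
  simp only [probReal_univ] at gibbs
  rw [dvFunctional]
  linarith

lemma ofReal_dvFunctional_le_klDiv [IsProbabilityMeasure μ] [IsProbabilityMeasure ν]
    {h : X → ℝ} (hh : Integrable h ν) (hexp : Integrable (fun x => exp (h x)) μ) :
    ENNReal.ofReal (dvFunctional μ ν h) ≤ klDiv ν μ := by
  by_cases hfin : klDiv ν μ = ∞
  · exact hfin ▸ le_top
  obtain ⟨hνμ, h_llr⟩ := klDiv_ne_top_iff.mp hfin
  rw [klDiv_of_ac_of_integrable hνμ h_llr]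
  gcongr
  simpa using dvFunctional_le_integral_llr hνμ h_llr hh hexp

lemma dvFunctional_indicator_const [IsProbabilityMeasure μ] {A : Set X} (hA : MeasurableSet A)
    (hμA : μ A = 0) (c : ℝ) : dvFunctional μ ν (A.indicator fun _ => c) = ν.real A * c := by
  have hexp : (fun x => exp (A.indicator (fun _ => c) x)) =ᵐ[μ] fun _ => 1 := by
    filter_upwards [measure_eq_zero_iff_ae_notMem.1 hμA] with x hx
    simp [hx]
  rw [dvFunctional, integral_congr_ae hexp, integral_indicator_const _ hA]
  simp

lemma integrable_exp_of_le [IsFiniteMeasure μ] {h : X → ℝ} (hh : AEStronglyMeasurable h μ)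
    {c : ℝ} (hc : ∀ x, h x ≤ c) : Integrable (fun x => exp (h x)) μ :=
  .of_bound (continuous_exp.comp_aestronglyMeasurable hh) (exp c) <| ae_of_all _ fun x => by
    simpa [abs_of_pos (exp_pos _)] using hc x

lemma dvFunctional_sub_dvFunctional_le [NeZero μ] {h g : X → ℝ}
    (hh : Integrable h ν) (hg : Integrable g ν) (hexph : Integrable (fun x => exp (h x)) μ)
    (hexpg : Integrable (fun x => exp (g x)) μ) (hdiff : Integrable (fun x => |h x - g x|) μ)
    {c : ℝ} (hgc : ∀ x, g x ≤ c) :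
    dvFunctional μ ν h - dvFunctional μ ν g ≤
      ∫ x, |h x - g x| ∂ν + exp c / (∫ x, exp (h x) ∂μ) * ∫ x, |h x - g x| ∂μ := by
  set Zh := ∫ x, exp (h x) ∂μ
  set Zg := ∫ x, exp (g x) ∂μ
  have hZh : 0 < Zh := integral_exp_pos hexph
  have hν : ∫ x, h x ∂ν - ∫ x, g x ∂ν ≤ ∫ x, |h x - g x| ∂ν := by
    rw [← integral_sub hh hg]
    exact integral_mono (hh.sub hg) (hh.sub hg).abs fun x => le_abs_self _
  have hZ : Zg - Zh ≤ exp c * ∫ x, |h x - g x| ∂μ := by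
    rw [← integral_sub hexpg hexph, ← integral_const_mul]
    refine integral_mono (hexpg.sub hexph) (hdiff.const_mul _) fun x => ?_
    simpa [abs_sub_comm] using exp_sub_exp_le_exp_mul_abs_sub (b := h x) (hgc x)
  have hlog : log Zg - log Zh ≤ (Zg - Zh) / Zh := by
    rw [← log_div (integral_exp_pos hexpg).ne' hZh.ne', sub_div, div_self hZh.ne']
    exact log_le_sub_one_of_pos (div_pos (integral_exp_pos hexpg) hZh)
  have hlog' : (Zg - Zh) / Zh ≤ exp c / Zh * ∫ x, |h x - g x| ∂μ := by
    rw [div_mul_eq_mul_div]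
    exact div_le_div_of_nonneg_right hZ hZh.le
  rw [dvFunctional, dvFunctional]
  linarith

lemma integral_rnDeriv_mul_sub_exp_le_dvFunctional [IsProbabilityMeasure μ] [SigmaFinite ν]
    (hνμ : ν ≪ μ) {h : X → ℝ} (hexp : Integrable (fun x => exp (h x)) μ)
    (hρh : Integrable (fun x => (ν.rnDeriv μ x).toReal * h x) μ) :
    ∫ x, ((ν.rnDeriv μ x).toReal * h x - exp (h x) + 1) ∂μ ≤ dvFunctional μ ν h := by
  have hν : ∫ x, (ν.rnDeriv μ x).toReal * h x ∂μ = ∫ x, h x ∂ν :=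
    integral_rnDeriv_smul hνμ
  have hdiff : Integrable (fun x => (ν.rnDeriv μ x).toReal * h x - exp (h x)) μ := hρh.sub hexp
  rw [integral_add hdiff (integrable_const 1), integral_sub hρh hexp, hν, dvFunctional]
  have := log_le_sub_one_of_pos (integral_exp_pos hexp)
  simp only [integral_const, probReal_univ, smul_eq_mul, mul_one]
  linarith

lemma integrable_truncLog_rnDeriv (ρ : Measure X) [IsFiniteMeasure ρ] (n : ℕ) :
    Integrable (fun x => truncLog n (ν.rnDeriv μ x).toReal) ρ :=
  .of_bound ((measurable_truncLog n).comp
    (ν.measurable_rnDeriv μ).ennreal_toReal).aestronglyMeasurable n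
    (ae_of_all _ fun _ => abs_truncLog_le n _)

lemma lintegral_ofReal_mul_truncLog_le [IsProbabilityMeasure μ] [IsFiniteMeasure ν] (hνμ : ν ≪ μ)
    (n : ℕ) :
    ∫⁻ x, ENNReal.ofReal ((ν.rnDeriv μ x).toReal * truncLog n (ν.rnDeriv μ x).toReal
      - exp (truncLog n (ν.rnDeriv μ x).toReal) + 1) ∂μ
      ≤ ENNReal.ofReal (dvFunctional μ ν fun x => truncLog n (ν.rnDeriv μ x).toReal) := by
  have hh := (integrable_truncLog_rnDeriv (μ := μ) (ν := ν) μ n).aestronglyMeasurable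
  have hexp := integrable_exp_of_le hh fun x => truncLog_le n _
  have hρh :
      Integrable (fun x => (ν.rnDeriv μ x).toReal * truncLog n (ν.rnDeriv μ x).toReal) μ :=
    Measure.integrable_toReal_rnDeriv.mul_bdd hh (ae_of_all _ fun x => abs_truncLog_le n _)
  have hφ : Integrable (fun x => (ν.rnDeriv μ x).toReal * truncLog n (ν.rnDeriv μ x).toReal
      - exp (truncLog n (ν.rnDeriv μ x).toReal) + 1) μ :=
    (hρh.sub hexp).add (integrable_const 1)
  rw [← ofReal_integral_eq_lintegral_ofReal hφ
    (ae_of_all _ fun x => mul_truncLog_sub_exp_add_one_nonneg _ n)]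
  exact ENNReal.ofReal_le_ofReal (integral_rnDeriv_mul_sub_exp_le_dvFunctional hνμ hexp hρh)

end Functional

section Supremum

variable {X : Type*} [TopologicalSpace X] [NormalSpace X] [MeasurableSpace X] [BorelSpace X]

lemma exists_boundedContinuous_le_integral_abs_sub_le (ρ : Measure X) [ρ.WeaklyRegular]
    {h : X → ℝ} (hh : Integrable h ρ) {c : ℝ} (hc : ∀ x, h x ≤ c) {δ : ℝ} (hδ : 0 < δ) :
    ∃ g : X →ᵇ ℝ, (∀ x, g x ≤ c) ∧ ∫ x, |h x - g x| ∂ρ ≤ δ := by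
  obtain ⟨g, hgδ, hg⟩ := hh.exists_boundedContinuous_integral_sub_le hδ
  refine ⟨g ⊓ BoundedContinuousFunction.const X c, fun x => inf_le_right, le_trans ?_ hgδ⟩
  refine integral_mono_of_nonneg (ae_of_all _ fun x => abs_nonneg _) (hh.sub hg).norm
    (ae_of_all _ fun x => ?_)
  -- `h ≤ c`, so truncating `g` at `c` only brings it closer to `h`
  calc |h x - (g ⊓ BoundedContinuousFunction.const X c) x| = |min (h x) c - min (g x) c| := by
        rw [min_eq_left (hc x)]; rfl
    _ ≤ max |h x - g x| |c - c| := abs_min_sub_min_le_max _ _ _ _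
    _ = ‖h x - g x‖ := by simp [Real.norm_eq_abs]

variable {μ ν : Measure X} [IsProbabilityMeasure μ] [IsProbabilityMeasure ν]
  [(μ + ν).WeaklyRegular]

lemma exists_boundedContinuous_dvFunctional_ge {h : X → ℝ} (hh : Integrable h (μ + ν)) {c : ℝ}
    (hc : ∀ x, h x ≤ c) {ε : ℝ} (hε : 0 < ε) :
    ∃ g : X →ᵇ ℝ, dvFunctional μ ν h - ε ≤ dvFunctional μ ν g := by
  have hexph := integrable_exp_of_le hh.left_of_add_measure.aestronglyMeasurable hc
  set K := 1 + exp c / ∫ x, exp (h x) ∂μ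
  have hK : 0 < K := by have := integral_exp_pos hexph; positivity
  obtain ⟨g, hgc, hgδ⟩ :=
    exists_boundedContinuous_le_integral_abs_sub_le (μ + ν) hh hc (div_pos hε hK)
  refine ⟨g, ?_⟩
  have hdiff : Integrable (fun x => |h x - g x|) (μ + ν) := (hh.sub (g.integrable _)).abs
  have hsplit := integral_add_measure hdiff.left_of_add_measure hdiff.right_of_add_measure
  have hμ : 0 ≤ ∫ x, |h x - g x| ∂μ := integral_nonneg fun x => abs_nonneg _
  have hν : 0 ≤ ∫ x, |h x - g x| ∂ν := integral_nonneg fun x => abs_nonneg _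
  have hperturb := dvFunctional_sub_dvFunctional_le hh.right_of_add_measure (g.integrable ν)
    hexph (integrable_exp_of_le g.continuous.aestronglyMeasurable hgc)
    hdiff.left_of_add_measure hgc
  have hKδ : K * ∫ x, |h x - g x| ∂(μ + ν) ≤ ε := by
    rwa [le_div_iff₀' hK] at hgδ
  have : 0 ≤ exp c / ∫ x, exp (h x) ∂μ := by positivity
  nlinarith

lemma ofReal_dvFunctional_le_iSup_boundedContinuous {h : X → ℝ} (hh : Integrable h (μ + ν))
    {c : ℝ} (hc : ∀ x, h x ≤ c) :
    ENNReal.ofReal (dvFunctional μ ν h) ≤ ⨆ g : X →ᵇ ℝ, ENNReal.ofReal (dvFunctional μ ν g) := by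
  refine ENNReal.le_of_forall_pos_le_add fun ε hε _ => ?_
  obtain ⟨g, hg⟩ :=
    exists_boundedContinuous_dvFunctional_ge hh hc (ε := ε) (by exact_mod_cast hε)
  calc ENNReal.ofReal (dvFunctional μ ν h)
      ≤ ENNReal.ofReal (dvFunctional μ ν g + ε) := ENNReal.ofReal_le_ofReal (by linarith)
    _ ≤ ENNReal.ofReal (dvFunctional μ ν g) + ε := by
        simpa using ENNReal.ofReal_add_le (p := dvFunctional μ ν g) (q := ε)
    _ ≤ _ := by gcongr; exact le_iSup_of_le g le_rfl

lemma klDiv_le_iSup_of_absolutelyContinuous (hνμ : ν ≪ μ) :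
    klDiv ν μ ≤ ⨆ g : X →ᵇ ℝ, ENNReal.ofReal (dvFunctional μ ν g) := by
  set ρ := fun x => (ν.rnDeriv μ x).toReal
  set φ := fun (n : ℕ) x => ENNReal.ofReal (ρ x * truncLog n (ρ x) - exp (truncLog n (ρ x)) + 1)
  calc klDiv ν μ = ∫⁻ x, ENNReal.ofReal (klFun (ρ x)) ∂μ := klDiv_eq_lintegral_klFun_of_ac hνμ
    _ = ∫⁻ x, liminf (fun n => φ n x) atTop ∂μ := lintegral_congr fun x =>
        ((ENNReal.continuous_ofReal.tendsto _).comp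
          (tendsto_mul_truncLog_sub_exp_add_one ENNReal.toReal_nonneg)).liminf_eq.symm
    _ ≤ liminf (fun n => ∫⁻ x, φ n x ∂μ) atTop := lintegral_liminf_le fun n => by
        have := measurable_truncLog n
        fun_prop
    _ ≤ _ := liminf_le_of_frequently_le' (.of_forall fun n =>
        (lintegral_ofReal_mul_truncLog_le hνμ n).trans
          (ofReal_dvFunctional_le_iSup_boundedContinuous (integrable_truncLog_rnDeriv _ n)
            fun _ => truncLog_le n _))

lemma iSup_dvFunctional_eq_top_of_not_absolutelyContinuous (hνμ : ¬ ν ≪ μ) :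
    ⨆ g : X →ᵇ ℝ, ENNReal.ofReal (dvFunctional μ ν g) = ∞ := by
  obtain ⟨A, hA, hμA, hνA⟩ : ∃ A, MeasurableSet A ∧ μ A = 0 ∧ ν A ≠ 0 := by
    by_contra! h
    exact hνμ (.mk fun s hs hμs => h s hs hμs)
  have hνA' : 0 < ν.real A := ENNReal.toReal_pos hνA (measure_ne_top ν A)
  refine ENNReal.eq_top_of_forall_nnreal_le fun r => ?_
  have hc : 0 ≤ (r : ℝ) / ν.real A := by positivity
  calc (r : ℝ≥0∞) = ENNReal.ofReal (dvFunctional μ ν (A.indicator fun _ => r / ν.real A)) := by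
        rw [dvFunctional_indicator_const hA hμA, mul_div_cancel₀ _ hνA'.ne', ofReal_coe_nnreal]
    _ ≤ _ := ofReal_dvFunctional_le_iSup_boundedContinuous ((integrable_const _).indicator hA)
        fun x => Set.indicator_le_self' (fun _ _ => hc) x

lemma klDiv_le_iSup_dvFunctional :
    klDiv ν μ ≤ ⨆ g : X →ᵇ ℝ, ENNReal.ofReal (dvFunctional μ ν g) := by
  by_cases hνμ : ν ≪ μ
  · exact klDiv_le_iSup_of_absolutelyContinuous hνμ
  · exact (iSup_dvFunctional_eq_top_of_not_absolutelyContinuous hνμ).symm ▸ le_top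

end Supremum

/-- Donsker–Varadhan variational formula: for Borel probability measures `μ, ν` on a
compact metric space `X`,
`H_μ(ν) = sup_{g ∈ C(X,ℝ)} ( ∫ g dν − log ∫ e^g dμ )`, the equality holding in `[0,+∞]`. -/
theorem relEntropy_eq_iSup_continuous {X : Type*} [MetricSpace X] [CompactSpace X]
    [MeasurableSpace X] [BorelSpace X]
    (μ ν : Measure X) [IsProbabilityMeasure μ] [IsProbabilityMeasure ν] :
    relEntropy μ ν =
      ⨆ g : C(X, ℝ),
        ENNReal.ofReal (∫ x, g x ∂ν - Real.log (∫ x, Real.exp (g x) ∂μ)) := by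
  rw [relEntropy_eq_klDiv]
  apply le_antisymm
  · calc klDiv ν μ ≤ ⨆ g : X →ᵇ ℝ, ENNReal.ofReal (dvFunctional μ ν g) :=
          klDiv_le_iSup_dvFunctional
      _ ≤ _ := iSup_le fun g => le_iSup_of_le g.toContinuousMap le_rfl
  · refine iSup_le fun g => ofReal_dvFunctional_le_klDiv ?_ ?_
    · exact g.continuous.integrable_of_hasCompactSupport (.of_compactSpace _)
    · exact (continuous_exp.comp g.continuous).integrable_of_hasCompactSupport
        (.of_compactSpace _)
end

section
/- Let X be a compact metric space, μ a Borel probability measure on X, and g : X → ℝ a lower semicontinuous function (hence bounded below on X). Then sup_ν ( ∫_X g dν − H_μ(ν) ) = log ∫_X e^g dμ, where the supremum ranges over all Borel probability measures ν on X with H_μ(ν) < +∞ (for such ν the integral ∫ g dν ∈ (−∞, +∞] is well defined since g is bounded below), and both sides of the equality take values in (−∞, +∞]. -/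
open MeasureTheory ENNReal

/-- The integral `∫ g dν` as an extended real number in `(−∞,+∞]`, defined as the
difference of the integrals of the positive and negative parts of `g` (meaningful
whenever the negative part of `g` is `ν`-integrable, e.g. when `g` is bounded below). -/
noncomputable def eIntegral {X : Type*} [MeasurableSpace X] (g : X → ℝ) (ν : Measure X) :
    EReal :=
  ((∫⁻ x, ENNReal.ofReal (g x) ∂ν : ℝ≥0∞) : EReal) -
    ((∫⁻ x, ENNReal.ofReal (-g x) ∂ν : ℝ≥0∞) : EReal)

/-!
For bounded measurable `h` this is the Donsker–Varadhan formula. Comparing `ν` with the Gibbs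
measure `μ.tilted h`, of density `e^h / ∫ e^h dμ` with respect to `μ`, gives
`∫ h dν - H_μ(ν) = log ∫ e^h dμ - H_{μ.tilted h}(ν)`, so Gibbs' inequality yields the upper bound,
with equality at `ν = μ.tilted h`. A lower semicontinuous `g` on a compact space is bounded below,
and its truncations `min g n` increase to `g`, so both sides pass to the limit by monotone
convergence.
-/

open InformationTheory Set

section RelEntropy

variable {X : Type*} [MeasurableSpace X]

lemma relEntropy_eq_klDiv_s1 {μ ν : Measure X} (h : ν.real univ = μ.real univ) :
    relEntropy μ ν = klDiv ν μ := by
  rw [relEntropy, klDiv_def, h, add_sub_cancel_right]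
  rfl

variable {μ ν : Measure X} [IsProbabilityMeasure μ] [IsProbabilityMeasure ν] {f : X → ℝ}

lemma integral_le_toReal_relEntropy_add_log_integral_exp (hν : relEntropy μ ν ≠ ⊤)
    (hf : Integrable f ν) (hexp : Integrable (fun x ↦ Real.exp (f x)) μ) :
    ∫ x, f x ∂ν ≤ (relEntropy μ ν).toReal + Real.log (∫ x, Real.exp (f x) ∂μ) := by
  have : IsProbabilityMeasure (μ.tilted f) := isProbabilityMeasure_tilted hexp
  rw [relEntropy_eq_klDiv_s1 (by simp)] at hν ⊢
  obtain ⟨hac, hllr⟩ := klDiv_ne_top_iff.mp hν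
  have hac_tilted : ν ≪ μ.tilted f := hac.trans (absolutelyContinuous_tilted hexp)
  have h_gibbs := ENNReal.toReal_nonneg (a := klDiv ν (μ.tilted f))
  rw [toReal_klDiv_of_measure_eq hac_tilted (by simp),
    integral_llr_tilted_right hac hf hexp hllr] at h_gibbs
  rw [toReal_klDiv_of_measure_eq hac (by simp)]
  linarith

lemma llr_tilted_self_ae_eq (hexp : Integrable (fun x ↦ Real.exp (f x)) μ) :
    llr (μ.tilted f) μ =ᵐ[μ.tilted f] fun x ↦ f x - Real.log (∫ x, Real.exp (f x) ∂μ) :=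
  (tilted_absolutelyContinuous μ f).ae_le (log_rnDeriv_tilted_left_self hexp)

lemma relEntropy_tilted_ne_top (hexp : Integrable (fun x ↦ Real.exp (f x)) μ)
    (hf : Integrable f (μ.tilted f)) : relEntropy μ (μ.tilted f) ≠ ⊤ := by
  have : IsProbabilityMeasure (μ.tilted f) := isProbabilityMeasure_tilted hexp
  rw [relEntropy_eq_klDiv_s1 (by simp)]
  exact klDiv_ne_top (tilted_absolutelyContinuous μ f)
    ((hf.sub (integrable_const _)).congr (llr_tilted_self_ae_eq hexp).symm)

lemma toReal_relEntropy_tilted (hexp : Integrable (fun x ↦ Real.exp (f x)) μ)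
    (hf : Integrable f (μ.tilted f)) :
    (relEntropy μ (μ.tilted f)).toReal
      = ∫ x, f x ∂(μ.tilted f) - Real.log (∫ x, Real.exp (f x) ∂μ) := by
  have : IsProbabilityMeasure (μ.tilted f) := isProbabilityMeasure_tilted hexp
  rw [relEntropy_eq_klDiv_s1 (by simp), toReal_klDiv_of_measure_eq (tilted_absolutelyContinuous μ f)
    (by simp), integral_congr_ae (llr_tilted_self_ae_eq hexp),
    integral_sub hf (integrable_const _)]
  simp

end RelEntropy

section EIntegral

variable {X : Type*} [MeasurableSpace X] {ν : Measure X} {f g : X → ℝ}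

lemma eIntegral_of_integrable (hg : Integrable g ν) :
    eIntegral g ν = ((∫ x, g x ∂ν : ℝ) : EReal) := by
  rw [eIntegral, integral_eq_lintegral_pos_part_sub_lintegral_neg_part hg, EReal.coe_sub,
    EReal.coe_ennreal_toReal, EReal.coe_ennreal_toReal]
  · exact ((lintegral_ofReal_le_lintegral_enorm _).trans_lt hg.neg.2).ne
  · exact ((lintegral_ofReal_le_lintegral_enorm _).trans_lt hg.2).ne

lemma eIntegral_mono (h : ∀ x, f x ≤ g x) : eIntegral f ν ≤ eIntegral g ν :=
  EReal.sub_le_sub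
    (EReal.coe_ennreal_le_coe_ennreal_iff.2 <|
      lintegral_mono fun x ↦ ENNReal.ofReal_le_ofReal (h x))
    (EReal.coe_ennreal_le_coe_ennreal_iff.2 <|
      lintegral_mono fun x ↦ ENNReal.ofReal_le_ofReal (neg_le_neg (h x)))

lemma log_lintegral_ofReal_exp [NeZero ν] (hexp : Integrable (fun x ↦ Real.exp (f x)) ν) :
    ENNReal.log (∫⁻ x, ENNReal.ofReal (Real.exp (f x)) ∂ν)
      = (Real.log (∫ x, Real.exp (f x) ∂ν) : EReal) := by
  rw [← ofReal_integral_eq_lintegral_ofReal hexp (ae_of_all _ fun x ↦ (Real.exp_pos _).le),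
    ENNReal.log_ofReal_of_pos (integral_exp_pos hexp)]

variable {μ : Measure X} [IsProbabilityMeasure μ] [IsProbabilityMeasure ν]

lemma eIntegral_sub_relEntropy_le_of_integrable (hν : relEntropy μ ν ≠ ⊤)
    (hf : Integrable f ν) (hexp : Integrable (fun x ↦ Real.exp (f x)) μ) :
    eIntegral f ν - relEntropy μ ν ≤ ENNReal.log (∫⁻ x, ENNReal.ofReal (Real.exp (f x)) ∂μ) := by
  rw [eIntegral_of_integrable hf, ← EReal.coe_ennreal_toReal hν, log_lintegral_ofReal_exp hexp,
    ← EReal.coe_sub, EReal.coe_le_coe_iff]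
  linarith [integral_le_toReal_relEntropy_add_log_integral_exp hν hf hexp]

lemma eIntegral_tilted_sub_relEntropy_tilted (hexp : Integrable (fun x ↦ Real.exp (f x)) μ)
    (hf : Integrable f (μ.tilted f)) :
    eIntegral f (μ.tilted f) - relEntropy μ (μ.tilted f)
      = ENNReal.log (∫⁻ x, ENNReal.ofReal (Real.exp (f x)) ∂μ) := by
  rw [eIntegral_of_integrable hf, ← EReal.coe_ennreal_toReal (relEntropy_tilted_ne_top hexp hf),
    toReal_relEntropy_tilted hexp hf, log_lintegral_ofReal_exp hexp, ← EReal.coe_sub,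
    _root_.sub_sub_cancel]

end EIntegral

section Truncation

variable {X : Type*} [MeasurableSpace X] {ν : Measure X} {g : X → ℝ}

lemma Monotone.iSup_comp_min_natCast {φ : ℝ → ℝ≥0∞} (hφ : Monotone φ) (a : ℝ) :
    ⨆ n : ℕ, φ (min a n) = φ a :=
  le_antisymm (iSup_le fun _ ↦ hφ (min_le_left _ _))
    (le_iSup_of_le ⌈a⌉₊ (by rw [min_eq_left (Nat.le_ceil a)]))

lemma lintegral_comp_eq_iSup_lintegral_comp_min {φ : ℝ → ℝ≥0∞} (hφ : Monotone φ)
    (hg : Measurable g) :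
    ∫⁻ x, φ (g x) ∂ν = ⨆ n : ℕ, ∫⁻ x, φ (min (g x) n) ∂ν := by
  simp_rw [← hφ.iSup_comp_min_natCast (g _)]
  exact lintegral_iSup (fun n ↦ hφ.measurable.comp (hg.min measurable_const))
    fun m n hmn x ↦ hφ (min_le_min_left _ (Nat.cast_le.mpr hmn))

variable [IsFiniteMeasure ν]

lemma integrable_of_forall_mem_Icc (hg : Measurable g) {a b : ℝ} (hab : ∀ x, g x ∈ Icc a b) :
    Integrable g ν :=
  .of_bound hg.aestronglyMeasurable (max |a| |b|)
    (ae_of_all _ fun x ↦ abs_le_max_abs_abs (hab x).1 (hab x).2)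

lemma integrable_min_natCast (hg : Measurable g) (hg_bdd : BddBelow (range g)) (n : ℕ) :
    Integrable (fun x ↦ min (g x) n) ν := by
  obtain ⟨b, hb⟩ := hg_bdd
  exact integrable_of_forall_mem_Icc (hg.min measurable_const)
    fun x ↦ ⟨min_le_min (hb (mem_range_self x)) le_rfl, min_le_right _ _⟩

lemma integrable_exp_min_natCast (hg : Measurable g) (n : ℕ) :
    Integrable (fun x ↦ Real.exp (min (g x) n)) ν :=
  integrable_of_forall_mem_Icc (hg.min measurable_const).exp
    fun _ ↦ ⟨(Real.exp_pos _).le, Real.exp_le_exp.2 (min_le_right _ _)⟩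

lemma eIntegral_le_of_forall_eIntegral_min_natCast_le (hg : Measurable g)
    (hg_bdd : BddBelow (range g)) {c : EReal}
    (h : ∀ n : ℕ, eIntegral (fun x ↦ min (g x) n) ν ≤ c) : eIntegral g ν ≤ c := by
  obtain ⟨b, hb⟩ := hg_bdd
  set B := ∫⁻ x, ENNReal.ofReal (-g x) ∂ν
  have h_neg (n : ℕ) : ∫⁻ x, ENNReal.ofReal (-min (g x) n) ∂ν = B := by
    refine lintegral_congr fun x ↦ ?_
    rcases le_total (g x) n with hx | hx
    · rw [min_eq_left hx]
    · rw [min_eq_right hx, ENNReal.ofReal_of_nonpos (by simp),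
        ENNReal.ofReal_of_nonpos (by linarith [(n.cast_nonneg : (0 : ℝ) ≤ n)])]
  have hB : B ≠ ⊤ :=
    ne_top_of_le_ne_top (by simp [lintegral_const, ENNReal.mul_eq_top])
      (lintegral_mono fun x ↦ ENNReal.ofReal_le_ofReal (neg_le_neg (hb (mem_range_self x))))
  have h_sub_iff {a : EReal} : a - (B : EReal) ≤ c ↔ a ≤ c + B :=
    EReal.sub_le_iff_le_add (.inl (by simp)) (.inl (by simpa using hB))
  have h_pos (n : ℕ) : ((∫⁻ x, ENNReal.ofReal (min (g x) n) ∂ν : ℝ≥0∞) : EReal) ≤ c + B := by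
    rw [← h_sub_iff, ← h_neg n]
    exact h n
  rw [eIntegral, h_sub_iff, lintegral_comp_eq_iSup_lintegral_comp_min ENNReal.ofReal_mono hg]
  calc ((⨆ n : ℕ, ∫⁻ x, ENNReal.ofReal (min (g x) n) ∂ν : ℝ≥0∞) : EReal)
      ≤ ((c + B).toENNReal : EReal) := EReal.coe_ennreal_le_coe_ennreal_iff.2 <| iSup_le fun n ↦ by
        simpa only [EReal.toENNReal_coe] using EReal.toENNReal_le_toENNReal (h_pos n)
    _ = c + B := EReal.coe_toENNReal ((EReal.coe_ennreal_nonneg _).trans (h_pos 0))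

end Truncation

section BddBelow

variable {X : Type*} [MeasurableSpace X] {μ : Measure X} [IsProbabilityMeasure μ] {g : X → ℝ}

lemma eIntegral_sub_relEntropy_le {ν : Measure X} [IsProbabilityMeasure ν] (hg : Measurable g)
    (hg_bdd : BddBelow (range g)) (hν : relEntropy μ ν ≠ ⊤) :
    eIntegral g ν - relEntropy μ ν ≤ ENNReal.log (∫⁻ x, ENNReal.ofReal (Real.exp (g x)) ∂μ) := by
  have h_sub_iff {a c : EReal} : a - relEntropy μ ν ≤ c ↔ a ≤ c + relEntropy μ ν := by
    rw [← EReal.coe_ennreal_toReal hν]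
    exact EReal.sub_le_iff_le_add (.inl (EReal.coe_ne_bot _)) (.inl (EReal.coe_ne_top _))
  rw [h_sub_iff]
  refine eIntegral_le_of_forall_eIntegral_min_natCast_le hg hg_bdd fun n ↦ h_sub_iff.1 ?_
  refine (eIntegral_sub_relEntropy_le_of_integrable hν (integrable_min_natCast hg hg_bdd n)
    (integrable_exp_min_natCast hg n)).trans (ENNReal.log_le_log (lintegral_mono fun x ↦ ?_))
  exact ENNReal.ofReal_le_ofReal (Real.exp_le_exp.2 (min_le_left _ _))

lemma log_lintegral_exp_le_iSup_eIntegral_sub_relEntropy (hg : Measurable g)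
    (hg_bdd : BddBelow (range g)) :
    ENNReal.log (∫⁻ x, ENNReal.ofReal (Real.exp (g x)) ∂μ) ≤
      ⨆ (ν : ProbabilityMeasure X) (_ : relEntropy μ (ν : Measure X) ≠ ⊤),
        eIntegral g (ν : Measure X) - ((relEntropy μ (ν : Measure X) : ℝ≥0∞) : EReal) := by
  rw [lintegral_comp_eq_iSup_lintegral_comp_min (φ := fun a ↦ ENNReal.ofReal (Real.exp a))
      (ENNReal.ofReal_mono.comp Real.exp_monotone) hg,
    ← ENNReal.logOrderIso_apply, OrderIso.map_iSup]
  refine iSup_le fun n ↦ ?_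
  set gₙ := fun x ↦ min (g x) n
  have hexp := integrable_exp_min_natCast (ν := μ) hg n
  have : IsProbabilityMeasure (μ.tilted gₙ) := isProbabilityMeasure_tilted hexp
  have hgₙ := integrable_min_natCast (ν := μ.tilted gₙ) hg hg_bdd n
  refine le_iSup₂_of_le (⟨μ.tilted gₙ, this⟩ : ProbabilityMeasure X)
    (relEntropy_tilted_ne_top hexp hgₙ) ?_
  rw [ENNReal.logOrderIso_apply, ← eIntegral_tilted_sub_relEntropy_tilted hexp hgₙ]
  exact EReal.sub_le_sub (eIntegral_mono fun x ↦ min_le_left _ _) le_rfl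

end BddBelow

lemma LowerSemicontinuous.bddBelow_range {X : Type*} [TopologicalSpace X] [CompactSpace X]
    {g : X → ℝ} (hg : LowerSemicontinuous g) : BddBelow (range g) := by
  simpa using (hg.lowerSemicontinuousOn univ).bddBelow_of_isCompact isCompact_univ

/-- For a lower semicontinuous function `g` on a compact metric space `X` (hence bounded
below) and a Borel probability measure `μ`,
`sup_ν ( ∫ g dν − H_μ(ν) ) = log ∫ e^g dμ`, the supremum ranging over all Borel
probability measures `ν` with finite relative entropy; both sides lie in `(−∞,+∞]`. -/
theorem iSup_sub_relEntropy_eq_log_integral_exp {X : Type*} [MetricSpace X] [CompactSpace X]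
    [MeasurableSpace X] [BorelSpace X]
    (μ : Measure X) [IsProbabilityMeasure μ]
    (g : X → ℝ) (hg : LowerSemicontinuous g) :
    (⨆ (ν : ProbabilityMeasure X) (_ : relEntropy μ (ν : Measure X) ≠ ⊤),
        eIntegral g (ν : Measure X) - ((relEntropy μ (ν : Measure X) : ℝ≥0∞) : EReal))
      = ENNReal.log (∫⁻ x, ENNReal.ofReal (Real.exp (g x)) ∂μ) :=
  le_antisymm
    (iSup₂_le fun _ hν ↦ eIntegral_sub_relEntropy_le hg.measurable hg.bddBelow_range hν)
    (log_lintegral_exp_le_iSup_eIntegral_sub_relEntropy hg.measurable hg.bddBelow_range)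
end

section
/- Let μ be a measure on a measurable space X, let χ be a weight with conjugate weight χ*, and let A ≥ 1 be a real number. Let f ≥ 0 be a measurable function with ∫ χ(f) dμ ≤ A, and let ν := f·μ be the measure with density f with respect to μ. Then for every measurable real-valued function g and every b > 0 such that ∫ χ*(|g|/b) dμ ≤ 1, one has ∫_X |g| dν ≤ 2 A b (the integrals being taken in [0, +∞]). -/
/-! Pointwise, the Fenchel–Young inequality `s t ≤ χ(s) + χ*(t)` with `s = f`, `t = |g| / b` gives
`f |g| ≤ b (χ(f) + χ*(|g|/b))`. Integrating, `∫ |g| dν ≤ b (A + 1) ≤ 2 A b`. -/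

open MeasureTheory ENNReal

/-- The conjugate weight `χ*` of a weight `χ : [0,∞) → [0,∞)`, defined by
`χ*(t) = sup_{s ≥ 0} (s·t − χ(s))`, with values in `[0,+∞]`. -/
noncomputable def conjWeight (χ : ℝ → ℝ) (t : ℝ) : ℝ≥0∞ :=
  ⨆ (s : ℝ) (_ : 0 ≤ s), ENNReal.ofReal (s * t - χ s)

theorem conjWeight_monotone (χ : ℝ → ℝ) : Monotone (conjWeight χ) := fun _ _ htt' =>
  iSup₂_mono fun _ hs => ENNReal.ofReal_le_ofReal (by nlinarith)

theorem ofReal_mul_le_add_conjWeight (χ : ℝ → ℝ) {s : ℝ} (hs : 0 ≤ s) (t : ℝ) :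
    ENNReal.ofReal (s * t) ≤ ENNReal.ofReal (χ s) + conjWeight χ t :=
  calc ENNReal.ofReal (s * t) = ENNReal.ofReal (χ s + (s * t - χ s)) := by ring_nf
    _ ≤ ENNReal.ofReal (χ s) + ENNReal.ofReal (s * t - χ s) := ENNReal.ofReal_add_le
    _ ≤ ENNReal.ofReal (χ s) + conjWeight χ t := by
        gcongr
        exact le_iSup₂_of_le (f := fun s (_ : 0 ≤ s) => ENNReal.ofReal (s * t - χ s)) s hs le_rfl

theorem lintegral_ofReal_mul_le_conjWeight {X : Type*} [MeasurableSpace X] (μ : Measure X)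
    (χ : ℝ → ℝ) {f h : X → ℝ} (hf0 : ∀ x, 0 ≤ f x) (hh : Measurable h) {b : ℝ} (hb : 0 < b) :
    ∫⁻ x, ENNReal.ofReal (f x * h x) ∂μ ≤
      ENNReal.ofReal b *
        (∫⁻ x, ENNReal.ofReal (χ (f x)) ∂μ + ∫⁻ x, conjWeight χ (h x / b) ∂μ) := by
  have hconj : Measurable fun x => conjWeight χ (h x / b) :=
    (conjWeight_monotone χ).measurable.comp (hh.div_const b)
  calc ∫⁻ x, ENNReal.ofReal (f x * h x) ∂μ
      = ∫⁻ x, ENNReal.ofReal b * ENNReal.ofReal (f x * (h x / b)) ∂μ := by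
        congr 1 with x
        rw [← ENNReal.ofReal_mul hb.le, mul_div_assoc', mul_div_cancel₀ _ hb.ne']
    _ ≤ ∫⁻ x, ENNReal.ofReal b * (ENNReal.ofReal (χ (f x)) + conjWeight χ (h x / b)) ∂μ := by
        gcongr with x
        exact ofReal_mul_le_add_conjWeight χ (hf0 x) _
    _ = ENNReal.ofReal b *
          (∫⁻ x, ENNReal.ofReal (χ (f x)) ∂μ + ∫⁻ x, conjWeight χ (h x / b) ∂μ) := by
        rw [lintegral_const_mul' _ _ ENNReal.ofReal_ne_top, lintegral_add_right _ hconj]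

theorem lintegral_abs_withDensity_le_general {X : Type*} [MeasurableSpace X] (μ : Measure X)
    (χ : ℝ → ℝ)
    (A : ℝ) (hA : 1 ≤ A)
    (f : X → ℝ) (hf : Measurable f) (hf0 : ∀ x, 0 ≤ f x)
    (hfA : ∫⁻ x, ENNReal.ofReal (χ (f x)) ∂μ ≤ ENNReal.ofReal A)
    (g : X → ℝ) (hg : Measurable g)
    (b : ℝ) (hb : 0 < b)
    (hgb : ∫⁻ x, conjWeight χ (|g x| / b) ∂μ ≤ 1) :
    ∫⁻ x, ENNReal.ofReal |g x| ∂(μ.withDensity fun x => ENNReal.ofReal (f x)) ≤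
      ENNReal.ofReal (2 * A * b) :=
  calc ∫⁻ x, ENNReal.ofReal |g x| ∂(μ.withDensity fun x => ENNReal.ofReal (f x))
      = ∫⁻ x, ENNReal.ofReal (f x * |g x|) ∂μ := by
        rw [lintegral_withDensity_eq_lintegral_mul μ hf.ennreal_ofReal hg.abs.ennreal_ofReal]
        simp only [Pi.mul_apply, ENNReal.ofReal_mul (hf0 _)]
    _ ≤ ENNReal.ofReal b * (ENNReal.ofReal A + ENNReal.ofReal 1) := by
        rw [ENNReal.ofReal_one]
        exact (lintegral_ofReal_mul_le_conjWeight μ χ hf0 hg.abs hb).trans (by gcongr)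
    _ ≤ ENNReal.ofReal (2 * A * b) := by
        rw [← ENNReal.ofReal_add (by linarith) zero_le_one, ← ENNReal.ofReal_mul hb.le]
        exact ENNReal.ofReal_le_ofReal (by nlinarith)

/-- If `χ` is a weight, `A ≥ 1`, `f ≥ 0` is measurable with `∫ χ(f) dμ ≤ A`, and
`ν := f·μ`, then for every measurable `g` and every `b > 0` with `∫ χ*(|g|/b) dμ ≤ 1`
one has `∫ |g| dν ≤ 2 A b`. -/
theorem lintegral_abs_withDensity_le {X : Type*} [MeasurableSpace X] (μ : Measure X)
    (χ : ℝ → ℝ) (hχconv : ConvexOn ℝ (Set.Ici 0) χ)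
    (hχmono : MonotoneOn χ (Set.Ici 0))
    (hχ0 : χ 0 = 0) (hχpos : ∀ s : ℝ, 0 < s → 0 < χ s)
    (A : ℝ) (hA : 1 ≤ A)
    (f : X → ℝ) (hf : Measurable f) (hf0 : ∀ x, 0 ≤ f x)
    (hfA : ∫⁻ x, ENNReal.ofReal (χ (f x)) ∂μ ≤ ENNReal.ofReal A)
    (g : X → ℝ) (hg : Measurable g)
    (b : ℝ) (hb : 0 < b)
    (hgb : ∫⁻ x, conjWeight χ (|g x| / b) ∂μ ≤ 1) :
    ∫⁻ x, ENNReal.ofReal |g x| ∂(μ.withDensity fun x => ENNReal.ofReal (f x)) ≤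
      ENNReal.ofReal (2 * A * b) :=
  lintegral_abs_withDensity_le_general μ χ A hA f hf hf0 hfA g hg b hb hgb
end

section
/- Let H > 0 be a real number and define h : [0,∞) → [0,∞) by h(t) = t + √(H·t). Then for every natural number p and every real t with 0 ≤ t ≤ 2^{−2^{p+1}}·H, the p-th iterate of h satisfies h^[p](t) ≤ 4 · H^{1 − 1/2^p} · t^{1/2^p}. -/
/-!
Writing `t = H u`, the map `s ↦ s + √(H s)` is conjugate to `g s = s + √s` by the scaling
`u ↦ H u`, so it suffices to bound `g^[p]`. Parametrize `u = y ^ 2 ^ p`: since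
`g (4 y²) = 4 y² + 2 y ≤ 4 y` for `y ≤ 1/2`, induction on `p` gives `g^[p] (y ^ 2 ^ p) ≤ 4 y`,
and `y = (t / H) ^ (1 / 2 ^ p)` turns this into the claimed bound.
-/

open Real

lemma add_sqrt_four_mul_sq_le {y : ℝ} (hy0 : 0 ≤ y) (hy : y ≤ 1 / 2) :
    4 * y ^ 2 + √(4 * y ^ 2) ≤ 4 * y := by
  rw [show 4 * y ^ 2 = (2 * y) ^ 2 by ring, sqrt_sq (by positivity)]
  nlinarith

lemma iterate_add_sqrt_pow_two_pow_le {y : ℝ} (hy0 : 0 ≤ y) (hy : y ≤ 1 / 2) (p : ℕ) :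
    (fun s : ℝ => s + √s)^[p] (y ^ 2 ^ p) ≤ 4 * y := by
  induction p generalizing y with
  | zero => simp only [Function.iterate_zero, id_eq, pow_zero, pow_one]; linarith
  | succ p ih =>
    have hmono : Monotone (fun s : ℝ => s + √s) := fun a b hab => add_le_add hab (sqrt_le_sqrt hab)
    rw [Function.iterate_succ_apply', pow_succ', pow_mul]
    calc _ ≤ 4 * y ^ 2 + √(4 * y ^ 2) := hmono (ih (sq_nonneg y) (by nlinarith))
      _ ≤ 4 * y := add_sqrt_four_mul_sq_le hy0 hy

lemma iterate_add_sqrt_mul_mul {c : ℝ} (hc : 0 ≤ c) (p : ℕ) (u : ℝ) :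
    (fun s : ℝ => s + √(c * s))^[p] (c * u) = c * (fun s : ℝ => s + √s)^[p] u := by
  have hconj : Function.Semiconj (c * ·) (fun s : ℝ => s + √s) (fun s => s + √(c * s)) := by
    intro s
    dsimp only
    rw [← mul_assoc, sqrt_mul (mul_self_nonneg c), sqrt_mul_self hc]
    ring
  exact (hconj.iterate_right p u).symm

/-- Let `H > 0` and `h(t) = t + √(H·t)`. Then for every natural number `p` and every
real `t` with `0 ≤ t ≤ 2^{−2^{p+1}}·H`, the `p`-th iterate of `h` satisfies
`h^[p](t) ≤ 4 · H^{1 − 1/2^p} · t^{1/2^p}`. -/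
theorem iterate_sqrt_bound (H : ℝ) (hH : 0 < H) (p : ℕ) (t : ℝ)
    (ht0 : 0 ≤ t) (ht : t ≤ H / 2 ^ 2 ^ (p + 1)) :
    (fun s : ℝ => s + Real.sqrt (H * s))^[p] t ≤
      4 * H ^ ((1 : ℝ) - 1 / 2 ^ p) * t ^ ((1 : ℝ) / 2 ^ p) := by
  have hu0 : 0 ≤ t / H := div_nonneg ht0 hH.le
  set y := (t / H) ^ ((1 : ℝ) / 2 ^ p) with hy_def
  have hy_pow : y ^ 2 ^ p = t / H := by
    rw [hy_def, show (1 : ℝ) / 2 ^ p = ((2 ^ p : ℕ) : ℝ)⁻¹ by push_cast; rw [one_div]]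
    exact rpow_inv_natCast_pow hu0 (by positivity)
  have hy_le : y ≤ 1 / 2 := by
    refine (pow_le_pow_iff_left₀ (by positivity) (by norm_num) (by positivity : 2 ^ p ≠ 0)).1 ?_
    calc y ^ 2 ^ p = t / H := hy_pow
      _ ≤ 1 / 2 ^ 2 ^ (p + 1) := by rwa [div_le_iff₀ hH, one_div_mul_eq_div]
      _ ≤ (1 / 2) ^ 2 ^ p := by
        rw [one_div_pow]
        gcongr <;> norm_num
  calc _ = H * (fun s : ℝ => s + √s)^[p] (y ^ 2 ^ p) := by
        rw [hy_pow, ← iterate_add_sqrt_mul_mul hH.le, mul_div_cancel₀ _ hH.ne']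
    _ ≤ H * (4 * y) := by gcongr; exact iterate_add_sqrt_pow_two_pow_le (by positivity) hy_le p
    _ = _ := by rw [hy_def, div_rpow ht0 hH.le, rpow_sub hH, rpow_one]; field_simp
end
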